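/- arXiv:2106.05947 — 7 statements merged into one kernel-verified Lean document; each statement's English description precedes it below -/
import Mathlib

section
/- Let A be an m×n integer matrix all of whose subdeterminants have absolute value at most Δ. Then there exists a subset J of the column indices with |J| ≤ log₂ Δ such that for every row index i, either all entries of row i lie in {-1,0,1}, or there is some j ∈ J with A_{ij} ≠ 0. -/
/-!
Choose a `k × k` submatrix with determinant of absolute value at least `2 ^ k`, with `k` maximal,
and let `J` be its columns; then `2 ^ k ≤ Δ`, so `|J| ≤ log₂ Δ`. If a row `i` vanished on `J` but
had an entry `A i j` with `|A i j| ≥ 2`, appending row `i` and column `j` would give a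
block-triangular submatrix with determinant `det · A i j`, of absolute value at least `2 ^ (k + 1)`,
contradicting the maximality of `k`.
-/

def TotallyDeltaModular {m n : ℕ} (A : Matrix (Fin m) (Fin n) ℤ) (Δ : ℤ) : Prop :=
  ∀ (k : ℕ) (f : Fin k → Fin m) (g : Fin k → Fin n),
    Function.Injective f → Function.Injective g → |(A.submatrix f g).det| ≤ Δ

open Matrix Function

theorem Matrix.det_submatrix_snoc_of_forall_eq_zero {R ι κ : Type*} [CommRing R]
    (A : Matrix ι κ R) {k : ℕ} (f : Fin k → ι) (g : Fin k → κ) {i : ι} (j : κ)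
    (hi : ∀ t, A i (g t) = 0) :
    (A.submatrix (Fin.snoc f i) (Fin.snoc g j)).det = (A.submatrix f g).det * A i j := by
  rw [det_succ_row _ (Fin.last k), Fin.sum_univ_castSucc]
  simp [hi, submatrix_submatrix, ← two_mul, mul_comm]

def HasLargeMinor {ι κ : Type*} (A : Matrix ι κ ℤ) (k : ℕ) : Prop :=
  ∃ (f : Fin k → ι) (g : Fin k → κ), Injective f ∧ Injective g ∧
    2 ^ k ≤ |(A.submatrix f g).det|

variable {ι κ : Type*} {A : Matrix ι κ ℤ}

theorem hasLargeMinor_zero : HasLargeMinor A 0 :=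
  ⟨finZeroElim, finZeroElim, injective_of_subsingleton _, injective_of_subsingleton _, by simp⟩

theorem HasLargeMinor.le_card [Fintype κ] {k : ℕ} (h : HasLargeMinor A k) :
    k ≤ Fintype.card κ := by
  obtain ⟨-, g, -, hg, -⟩ := h
  simpa using Fintype.card_le_of_injective g hg

theorem HasLargeMinor.succ {k : ℕ} {f : Fin k → ι} {g : Fin k → κ} (hf : Injective f)
    (hg : Injective g) (hdet : 2 ^ k ≤ |(A.submatrix f g).det|) {i : ι} {j : κ}
    (hi : ∀ t, A i (g t) = 0) (hij : 2 ≤ |A i j|) : HasLargeMinor A (k + 1) := by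
  have hdet_ne : (A.submatrix f g).det ≠ 0 := by
    rintro h0
    rw [h0, abs_zero] at hdet
    exact (pow_pos two_pos k).not_ge hdet
  have hi_mem : i ∉ Set.range f := by
    rintro ⟨s, rfl⟩
    exact hdet_ne (det_eq_zero_of_row_eq_zero s fun t => hi t)
  have hj_mem : j ∉ Set.range g := by
    rintro ⟨t, rfl⟩
    simp [hi t] at hij
  refine ⟨Fin.snoc f i, Fin.snoc g j, Fin.snoc_injective_of_injective hf hi_mem,
    Fin.snoc_injective_of_injective hg hj_mem, ?_⟩
  rw [det_submatrix_snoc_of_forall_eq_zero A f g j hi, abs_mul, pow_succ]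
  exact mul_le_mul hdet hij zero_le_two (abs_nonneg _)

theorem exists_largeMinor_covering_rows [Fintype κ] :
    ∃ (k : ℕ) (f : Fin k → ι) (g : Fin k → κ), Injective f ∧ Injective g ∧
      2 ^ k ≤ |(A.submatrix f g).det| ∧ ∀ i, (∀ j, |A i j| ≤ 1) ∨ ∃ t, A i (g t) ≠ 0 := by
  classical
  set k := Nat.findGreatest (HasLargeMinor A) (Fintype.card κ)
  obtain ⟨f, g, hf, hg, hdet⟩ : HasLargeMinor A k :=
    Nat.findGreatest_spec (Nat.zero_le _) hasLargeMinor_zero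
  refine ⟨k, f, g, hf, hg, hdet, fun i => ?_⟩
  by_contra! hrow
  obtain ⟨⟨j, hj⟩, hi⟩ := hrow
  have hmax := HasLargeMinor.succ hf hg hdet hi hj
  exact Nat.findGreatest_is_greatest (Nat.lt_succ_self k) hmax.le_card hmax

theorem stmt0_general {m n : ℕ} (A : Matrix (Fin m) (Fin n) ℤ) (Δ : ℤ)
    (hA : TotallyDeltaModular A Δ) :
    ∃ J : Finset (Fin n), (J.card : ℝ) ≤ Real.logb 2 (Δ : ℝ) ∧
      ∀ i : Fin m, (∀ j, A i j ∈ ({-1, 0, 1} : Set ℤ)) ∨ ∃ j ∈ J, A i j ≠ 0 := by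
  obtain ⟨k, f, g, hf, hg, hdet, hcover⟩ := exists_largeMinor_covering_rows (A := A)
  have hΔ : (2 : ℝ) ^ k ≤ Δ := by exact_mod_cast hdet.trans (hA k f g hf hg)
  refine ⟨Finset.univ.image g, ?_, fun i => (hcover i).imp ?_ ?_⟩
  · calc ((Finset.univ.image g).card : ℝ) ≤ k := by
          exact_mod_cast Finset.card_image_le.trans (by simp)
      _ ≤ Real.logb 2 Δ := by
          rw [Real.le_logb_iff_rpow_le one_lt_two ((pow_pos two_pos k).trans_le hΔ),
            Real.rpow_natCast]
          exact hΔ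
  · intro h j
    have := abs_le.mp (h j)
    simp only [Set.mem_insert_iff, Set.mem_singleton_iff]
    omega
  · rintro ⟨t, ht⟩
    exact ⟨g t, Finset.mem_image_of_mem g (Finset.mem_univ t), ht⟩

/-- if all subdeterminants of `A` have absolute value at most `Δ`, then there
is a set `J` of at most `log₂ Δ` columns such that every row either has all entries in
`{-1,0,1}` or has a nonzero entry in some column of `J`. -/
theorem stmt0 {m n : ℕ} (A : Matrix (Fin m) (Fin n) ℤ) (Δ : ℤ) (hΔ : 1 ≤ Δ)
    (hA : TotallyDeltaModular A Δ) :
    ∃ J : Finset (Fin n), (J.card : ℝ) ≤ Real.logb 2 (Δ : ℝ) ∧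
      ∀ i : Fin m, (∀ j, A i j ∈ ({-1, 0, 1} : Set ℤ)) ∨ ∃ j ∈ J, A i j ≠ 0 :=
  stmt0_general A Δ hA
end

section
/- Let G be a graph, M a K_t model in G, and X a vertex subset of G with |X| ≤ t−2. Then there is a unique block of G − X that intersects every branch set of M not met by X. -/
open SimpleGraph

/-- The graph obtained from `G` by deleting a set `X` of vertices. -/
def SimpleGraph.deleteSet {V : Type*} (G : SimpleGraph V) (X : Set V) : SimpleGraph V where
  Adj u v := G.Adj u v ∧ u ∉ X ∧ v ∉ X
  symm := ⟨fun u v h => ⟨h.1.symm, h.2.2, h.2.1⟩⟩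
  loopless := ⟨fun v h => G.loopless.irrefl v h.1⟩

/-- A model of the complete graph `K t` in a graph `G`. -/
structure KtModel {V : Type*} (G : SimpleGraph V) (t : ℕ) where
  branch : Fin t → Set V
  nonempty : ∀ i, (branch i).Nonempty
  disjoint : ∀ i j, i ≠ j → Disjoint (branch i) (branch j)
  connected : ∀ i, (G.induce (branch i)).Connected
  me : ∀ i j, i ≠ j → V × V
  me_spec : ∀ i j (hij : i ≠ j),
    (me i j hij).1 ∈ branch i ∧ (me i j hij).2 ∈ branch j ∧
      G.Adj (me i j hij).1 (me i j hij).2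

/-- Two edges lie in a common block: they are equal or lie on a common cycle.
The equivalence classes of this relation are the edge sets of the blocks of `H`. -/
def SameBlock {V : Type*} (H : SimpleGraph V) (e e' : Sym2 V) : Prop :=
  e = e' ∨ ∃ (u : V) (p : H.Walk u u), p.IsCycle ∧ e ∈ p.edges ∧ e' ∈ p.edges

/-- The block (equivalence class) of the edge `e₀` of `H` meets the vertex set `B`. -/
def BlockMeets {V : Type*} (H : SimpleGraph V) (e₀ : Sym2 V) (B : Set V) : Prop :=
  ∃ e ∈ H.edgeSet, SameBlock H e₀ e ∧ ∃ v ∈ e, v ∈ B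

/-!
There are at least two branch sets `B i`, `B j` that `X` misses, since every vertex of `X` lies in
at most one branch set; let `e₀ = xy` be the model edge between them. A path from `x` to `y`
through a third missed branch set `B k` closes a cycle with `e₀`, so the block of `e₀` meets
`B k`. For uniqueness we use that a path joining two distinct vertices of a block stays inside
the block: split it at its inner vertices on a cycle of the block, and close each piece that is
not an edge of the cycle (an ear) with the arc of the cycle through a given edge. If the block
of `e₁` meets `B i` at `a` and `B j` at `b`, the `a`–`b` path through `xy` inside `B i ∪ B j`
therefore puts `e₀` in the block of `e₁`.
-/

namespace SimpleGraph.Walk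

variable {V : Type*} {G : SimpleGraph V} {u v w x : V}

lemma IsPath.start_notMem_support_tail {p : G.Walk u v} (hp : p.IsPath) : u ∉ p.support.tail :=
  (List.nodup_cons.mp (p.cons_tail_support ▸ hp.support_nodup)).1

lemma IsPath.isCycle_append_of_mem_edges {p : G.Walk u v} {q : G.Walk v u} (hp : p.IsPath)
    (hq : q.IsPath) (hpq : p.support.tail.Disjoint q.support.tail) {e : Sym2 V}
    (hep : e ∈ p.edges) (heq : e ∉ q.edges) : (p.append q).IsCycle := by
  refine hp.isCycle_append hq hpq ?_
  -- two walks of length at most one would both be the single edge `s(u, v)`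
  by_contra! hle
  cases p with
  | nil => simp at hep
  | cons h p' =>
    cases p' with
    | cons _ _ => simp at hle
    | nil =>
      cases q with
      | nil => exact h.ne rfl
      | cons h' q' =>
        cases q' with
        | cons _ _ => simp at hle
        | nil => simp_all [Sym2.eq_swap]

lemma IsPath.append_cons_of_disjoint {S T : Set V} {p : G.Walk u v} {q : G.Walk w x}
    (hp : p.IsPath) (hq : q.IsPath) (h : G.Adj v w) (hpS : ∀ y ∈ p.support, y ∈ S)
    (hqT : ∀ y ∈ q.support, y ∈ T) (hST : Disjoint S T) : (p.append (cons h q)).IsPath := by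
  rw [isPath_def, support_append, support_cons, List.tail_cons]
  exact hp.support_nodup.append hq.support_nodup fun y hyp hyq =>
    Set.disjoint_left.mp hST (hpS y hyp) (hqT y hyq)

lemma IsCycle.exists_isPath_mem_edges {c : G.Walk u u} (hc : c.IsCycle) {a b : V}
    (ha : a ∈ c.support) (hb : b ∈ c.support) (hab : a ≠ b) {h : Sym2 V}
    (hh : h ∈ c.edges) :
    ∃ q : G.Walk a b, q.IsPath ∧ h ∈ q.edges ∧ (∀ y ∈ q.support, y ∈ c.support) ∧
      ∀ e ∈ q.edges, e ∈ c.edges := by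
  classical
  set c' := c.rotate a ha
  have hc' : c'.IsCycle := hc.rotate ha
  have hsupp : ∀ y, y ∈ c'.support ↔ y ∈ c.support := fun y => c.mem_support_rotate_iff a ha
  have hedges : ∀ e, e ∈ c'.edges ↔ e ∈ c.edges := fun e => (c.rotate_edges a ha).mem_iff
  have hb' : b ∈ c'.support := (hsupp b).mpr hb
  have hsplit : (c'.takeUntil b hb').append (c'.dropUntil b hb') = c' := c'.take_spec hb'
  have hcyc : ((c'.takeUntil b hb').append (c'.dropUntil b hb')).IsCycle := by rwa [hsplit]
  have hh' : h ∈ (c'.takeUntil b hb').edges ∨ h ∈ (c'.dropUntil b hb').edges := by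
    rw [← List.mem_append, ← edges_append, hsplit, hedges]
    exact hh
  rcases hh' with hA | hB
  · exact ⟨_, hc'.isPath_takeUntil hb', hA,
      fun y hy => (hsupp y).mp (c'.support_takeUntil_subset_support hb' hy),
      fun e he => (hedges e).mp (c'.edges_takeUntil_subset_edges hb' he)⟩
  · refine ⟨_, (hcyc.isPath_of_append_right (not_nil_of_ne hab)).reverse,
      by simpa using hB, fun y hy => ?_, fun e he => ?_⟩
    · rw [support_reverse, List.mem_reverse] at hy
      exact (hsupp y).mp (c'.support_dropUntil_subset_support hb' hy)
    · rw [edges_reverse, List.mem_reverse] at he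
      exact (hedges e).mp (c'.edges_dropUntil_subset_edges hb' he)

end SimpleGraph.Walk

namespace SameBlock

open Walk

variable {V : Type*} {H : SimpleGraph V} {u : V} {e f g h : Sym2 V}

lemma refl (e : Sym2 V) : SameBlock H e e := Or.inl rfl

lemma symm (hef : SameBlock H e f) : SameBlock H f e :=
  hef.imp Eq.symm fun ⟨u, c, hc, he, hf⟩ => ⟨u, c, hc, hf, he⟩

lemma of_isCycle {c : H.Walk u u} (hc : c.IsCycle) (he : e ∈ c.edges) (hf : f ∈ c.edges) :
    SameBlock H e f :=
  Or.inr ⟨u, c, hc, he, hf⟩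

lemma of_ear {c : H.Walk u u} (hc : c.IsCycle) (hh : h ∈ c.edges) {a b : V}
    (ha : a ∈ c.support) (hb : b ∈ c.support) (hab : a ≠ b) {p : H.Walk a b} (hp : p.IsPath)
    (hpc : ∀ w ∈ p.support, w ∈ c.support → w = a ∨ w = b) (he : e ∈ p.edges)
    (hec : e ∉ c.edges) : SameBlock H h e := by
  obtain ⟨q, hq, hhq, hqc, hqc'⟩ := hc.exists_isPath_mem_edges hb ha hab.symm hh
  have hpq : p.support.tail.Disjoint q.support.tail := fun w hwp hwq => by
    rcases hpc w (List.mem_of_mem_tail hwp) (hqc w (List.mem_of_mem_tail hwq)) with rfl | rfl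
    · exact hp.start_notMem_support_tail hwp
    · exact hq.start_notMem_support_tail hwq
  exact .of_isCycle (hp.isCycle_append_of_mem_edges hq hpq he fun heq => hec (hqc' e heq))
    (by simp [hhq]) (by simp [he])

theorem of_isPath_of_mem_support {c : H.Walk u u} (hc : c.IsCycle) (hh : h ∈ c.edges) {a b : V}
    (p : H.Walk a b) (hp : p.IsPath) (ha : a ∈ c.support) (hb : b ∈ c.support) (hab : a ≠ b)
    (he : e ∈ p.edges) : SameBlock H h e := by
  induction hn : p.length using Nat.strong_induction_on generalizing a b with
  | _ n ih =>
  by_cases hw : ∃ w ∈ p.support, w ∈ c.support ∧ w ≠ a ∧ w ≠ b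
  · obtain ⟨w, hwp, hwc, hwa, hwb⟩ := hw
    obtain ⟨p₁, p₂, hp₁, hp₂, rfl⟩ := hp.mem_support_iff_exists_append.mp hwp
    have h₁ : p₁.length ≠ 0 := fun h0 => hwa (eq_of_length_eq_zero h0).symm
    have h₂ : p₂.length ≠ 0 := fun h0 => hwb (eq_of_length_eq_zero h0)
    rw [length_append] at hn
    rw [edges_append, List.mem_append] at he
    rcases he with he | he
    · exact ih _ (by omega) p₁ hp₁ ha hwc hwa.symm he rfl
    · exact ih _ (by omega) p₂ hp₂ hwc hb hwb he rfl
  · by_cases hec : e ∈ c.edges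
    · exact .of_isCycle hc hh hec
    · refine .of_ear hc hh ha hb hab hp (fun w hwp hwc => ?_) he hec
      by_contra! hne
      exact hw ⟨w, hwp, hwc, hne⟩

lemma trans (hef : SameBlock H e f) (hfg : SameBlock H f g) : SameBlock H e g := by
  rcases hef with rfl | ⟨u, c, hc, hec, hfc⟩
  · exact hfg
  rcases hfg with rfl | ⟨w, d, hd, hfd, hgd⟩
  · exact .of_isCycle hc hec hfc
  induction f with
  | h p q =>
    have hpq : p ≠ q := (c.adj_of_mem_edges hfc).ne
    obtain ⟨r, hr, hgr, -, -⟩ := hd.exists_isPath_mem_edges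
      (d.fst_mem_support_of_mem_edges hfd) (d.snd_mem_support_of_mem_edges hfd) hpq hgd
    exact of_isPath_of_mem_support hc hec r hr
      (c.fst_mem_support_of_mem_edges hfc) (c.snd_mem_support_of_mem_edges hfc) hpq hgr

lemma of_isPath_of_mem (hf : f ∈ H.edgeSet) (hfg : SameBlock H f g) {a b : V} (ha : a ∈ f)
    (hb : b ∈ g) (hab : a ≠ b) (p : H.Walk a b) (hp : p.IsPath) (he : e ∈ p.edges) :
    SameBlock H f e := by
  rcases hfg with rfl | ⟨u, c, hc, hfc, hgc⟩
  · obtain rfl : f = s(a, b) := (Sym2.mem_and_mem_iff hab).mp ⟨ha, hb⟩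
    by_cases habp : s(a, b) ∈ p.edges
    · rw [hp.eq_adj_toWalk_of_mem_edges habp] at he
      simp only [Adj.toWalk, edges_cons, edges_nil, List.mem_singleton] at he
      exact he ▸ .refl _
    · have hcyc := (cons_isCycle_iff p (H.mem_edgeSet.mp hf).symm).mpr
        ⟨hp, by rwa [Sym2.eq_swap]⟩
      exact .of_isCycle hcyc (by simp [Sym2.eq_swap]) (by simp [he])
  · exact of_isPath_of_mem_support hc hfc p hp (c.mem_support_of_mem_edges hfc ha)
      (c.mem_support_of_mem_edges hgc hb) hab he

end SameBlock

open Function in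
lemma Pairwise.exists_ne_disjoint_of_card_add_two_le {ι V : Type*} [Fintype ι]
    {B : ι → Set V} (hB : Pairwise (Disjoint on B)) {X : Finset V}
    (hX : X.card + 2 ≤ Fintype.card ι) :
    ∃ i j, i ≠ j ∧ Disjoint (B i) ↑X ∧ Disjoint (B j) ↑X := by
  classical
  have hmeet : (Finset.univ.filter fun i => ¬Disjoint (B i) ↑X).card ≤ X.card := by
    refine Finset.card_le_card_of_forall_subsingleton (fun i x => x ∈ B i) (fun i hi => ?_)
      fun x _ i hi j hj => by_contra fun hij => Set.disjoint_left.mp (hB hij) hi.2 hj.2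
    obtain ⟨x, hxB, hxX⟩ := Set.not_disjoint_iff.mp (Finset.mem_filter.mp hi).2
    exact ⟨x, hxX, hxB⟩
  have hsplit := Finset.card_filter_add_card_filter_not (s := Finset.univ)
    fun i => Disjoint (B i) ↑X
  rw [Finset.card_univ] at hsplit
  have hmiss : 1 < (Finset.univ.filter fun i => Disjoint (B i) ↑X).card := by omega
  obtain ⟨i, hi, j, hj, hij⟩ := Finset.one_lt_card.mp hmiss
  exact ⟨i, j, hij, (Finset.mem_filter.mp hi).2, (Finset.mem_filter.mp hj).2⟩

lemma SimpleGraph.Connected.exists_isPath_deleteSet {V : Type*} {G : SimpleGraph V}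
    {B X : Set V} (hB : (G.induce B).Connected) (hBX : Disjoint B X) {x y : V} (hx : x ∈ B)
    (hy : y ∈ B) :
    ∃ p : (G.deleteSet X).Walk x y, p.IsPath ∧ ∀ w ∈ p.support, w ∈ B := by
  let φ : G.induce B →g G.deleteSet X :=
    ⟨Subtype.val, fun {u v} huv =>
      ⟨huv, Set.disjoint_left.mp hBX u.2, Set.disjoint_left.mp hBX v.2⟩⟩
  obtain ⟨p, hp⟩ := hB.exists_isPath ⟨x, hx⟩ ⟨y, hy⟩
  refine ⟨p.map φ, hp.map Subtype.val_injective, fun w hw => ?_⟩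
  obtain ⟨u, -, rfl⟩ := List.mem_map.mp ((p.support_map φ) ▸ hw)
  exact u.2

namespace KtModel

open Walk

variable {V : Type*} {G : SimpleGraph V} {t : ℕ} (M : KtModel G t) {X : Set V} {i j k : Fin t}

lemma deleteSet_adj_me (hij : i ≠ j) (hi : Disjoint (M.branch i) X)
    (hj : Disjoint (M.branch j) X) : (G.deleteSet X).Adj (M.me i j hij).1 (M.me i j hij).2 :=
  have ⟨hx, hy, hxy⟩ := M.me_spec i j hij
  ⟨hxy, Set.disjoint_left.mp hi hx, Set.disjoint_left.mp hj hy⟩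

lemma exists_isPath_mem_edges (hij : i ≠ j) (hi : Disjoint (M.branch i) X)
    (hj : Disjoint (M.branch j) X) {u v x y : V} (hu : u ∈ M.branch i) (hv : v ∈ M.branch j)
    (hx : x ∈ M.branch i) (hy : y ∈ M.branch j) (hxy : (G.deleteSet X).Adj x y) :
    ∃ p : (G.deleteSet X).Walk u v, p.IsPath ∧ s(x, y) ∈ p.edges ∧
      ∀ w ∈ p.support, w ∈ M.branch i ∪ M.branch j := by
  obtain ⟨p, hp, hpB⟩ := (M.connected i).exists_isPath_deleteSet hi hu hx
  obtain ⟨q, hq, hqB⟩ := (M.connected j).exists_isPath_deleteSet hj hy hv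
  refine ⟨p.append (cons hxy q), hp.append_cons_of_disjoint hq hxy hpB hqB (M.disjoint i j hij),
    by simp, fun w hw => ?_⟩
  rw [support_append, support_cons, List.tail_cons, List.mem_append] at hw
  exact hw.imp (hpB w) (hqB w)

lemma blockMeets_of_adj (hij : i ≠ j) (hi : Disjoint (M.branch i) X)
    (hj : Disjoint (M.branch j) X) {x y : V} (hx : x ∈ M.branch i) (hy : y ∈ M.branch j)
    (hxy : (G.deleteSet X).Adj x y) (hk : Disjoint (M.branch k) X) :
    BlockMeets (G.deleteSet X) s(x, y) (M.branch k) := by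
  by_cases hki : k = i
  · exact ⟨s(x, y), hxy, .refl _, x, Sym2.mem_mk_left x y, hki ▸ hx⟩
  by_cases hkj : k = j
  · exact ⟨s(x, y), hxy, .refl _, y, Sym2.mem_mk_right x y, hkj ▸ hy⟩
  obtain ⟨hu, hv, -⟩ := M.me_spec i k (Ne.symm hki)
  obtain ⟨hw, hz, -⟩ := M.me_spec k j hkj
  have huv := M.deleteSet_adj_me (Ne.symm hki) hi hk
  obtain ⟨p, hp, huvp, hpB⟩ := M.exists_isPath_mem_edges (Ne.symm hki) hi hk hx hw hu hv huv
  obtain ⟨q, hq, hqB⟩ := (M.connected j).exists_isPath_deleteSet hj hz hy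
  have hpq := hp.append_cons_of_disjoint hq (M.deleteSet_adj_me hkj hk hj) hpB hqB
    (Set.disjoint_union_left.mpr ⟨M.disjoint i j hij, M.disjoint k j hkj⟩)
  exact ⟨_, huv, .of_isPath_of_mem hxy (.refl _) (Sym2.mem_mk_left x y) (Sym2.mem_mk_right x y)
    hxy.ne _ hpq (by simp [huvp]), _, Sym2.mem_mk_right _ _, hv⟩

lemma sameBlock_of_blockMeets (hij : i ≠ j) (hi : Disjoint (M.branch i) X)
    (hj : Disjoint (M.branch j) X) {x y : V} (hx : x ∈ M.branch i) (hy : y ∈ M.branch j)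
    (hxy : (G.deleteSet X).Adj x y) {e : Sym2 V} (hei : BlockMeets (G.deleteSet X) e (M.branch i))
    (hej : BlockMeets (G.deleteSet X) e (M.branch j)) : SameBlock (G.deleteSet X) s(x, y) e := by
  obtain ⟨f, hf, hef, a, haf, ha⟩ := hei
  obtain ⟨g, -, heg, b, hbg, hb⟩ := hej
  obtain ⟨p, hp, hxyp, -⟩ := M.exists_isPath_mem_edges hij hi hj ha hb hx hy hxy
  have hab : a ≠ b := fun hab => Set.disjoint_left.mp (M.disjoint i j hij) ha (hab ▸ hb)
  exact (SameBlock.of_isPath_of_mem hf (hef.symm.trans heg) haf hbg hab p hp hxyp).symm.trans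
    hef.symm

end KtModel

/-- if `M` is a `K t` model in `G` and `|X| ≤ t - 2`, then there is a unique
block of `G - X` intersecting every branch set of `M` avoided by `X`. -/
theorem stmt3 {V : Type*} (G : SimpleGraph V) (t : ℕ) (M : KtModel G t)
    (X : Finset V) (hX : X.card + 2 ≤ t) :
    ∃ e₀ ∈ (G.deleteSet ↑X).edgeSet,
      (∀ i, Disjoint (M.branch i) (↑X : Set V) →
        BlockMeets (G.deleteSet ↑X) e₀ (M.branch i)) ∧
      ∀ e₁ ∈ (G.deleteSet ↑X).edgeSet,
        (∀ i, Disjoint (M.branch i) (↑X : Set V) →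
          BlockMeets (G.deleteSet ↑X) e₁ (M.branch i)) →
        SameBlock (G.deleteSet ↑X) e₀ e₁ := by
  obtain ⟨i, j, hij, hi, hj⟩ := Pairwise.exists_ne_disjoint_of_card_add_two_le
    (fun i j hij => M.disjoint i j hij) (X := X) (by simpa using hX)
  obtain ⟨hx, hy, -⟩ := M.me_spec i j hij
  have hxy := M.deleteSet_adj_me hij hi hj
  exact ⟨_, hxy, fun k hk => M.blockMeets_of_adj hij hi hj hx hy hxy hk,
    fun e _ he => M.sameBlock_of_blockMeets hij hi hj hx hy hxy (he i hi) (he j hj)⟩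
end

section
/- Let W be a graph with two vertices v₁, v₂ such that all v₁–v₂ paths in W have odd length. Let S₁, S₂ be stable sets in W with S₁ ⊇ {v₁,v₂} and S₂ ∩ {v₁,v₂} = ∅. Then there exist stable sets S₃, S₄ in W with S₃ ∩ {v₁,v₂} = {v₁}, S₄ ∩ {v₁,v₂} = {v₂}, S₁ ∪ S₂ = S₃ ∪ S₄, and S₁ ∩ S₂ = S₃ ∩ S₄. -/
open SimpleGraph

/-- A stable set: no two of its vertices are adjacent. -/
def IsStable {V : Type*} (G : SimpleGraph V) (S : Set V) : Prop :=
  ∀ u ∈ S, ∀ v ∈ S, ¬ G.Adj u v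

/-!
Swap `S₁` and `S₂` on the Kempe component `C` of `v₁`: its component in the subgraph of `W`
formed by the edges between `S₁` and `S₂`. Swapping on a union of such components keeps both
sets stable and preserves their union and intersection. Membership in `S₁` properly 2-colours
the Kempe graph, so a path in it between `v₁, v₂ ∈ S₁` has even length; as every `v₁`–`v₂`
path in `W` is odd, `v₂ ∉ C`, and the swapped sets meet `{v₁, v₂}` as required.
-/

namespace SimpleGraph

variable {V : Type*} (G : SimpleGraph V) (S T : Set V)

def kempeGraph : SimpleGraph V where
  Adj u v := G.Adj u v ∧ (u ∈ S ∧ v ∈ T ∨ u ∈ T ∧ v ∈ S)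
  symm := ⟨fun _ _ h => ⟨h.1.symm, h.2.symm.imp And.symm And.symm⟩⟩
  loopless := ⟨fun u h => G.loopless.irrefl u h.1⟩

variable {G S T}

theorem kempeGraph_le : G.kempeGraph S T ≤ G := fun _ _ h => h.1

theorem kempeGraph_comm : G.kempeGraph S T = G.kempeGraph T S := by
  ext u v
  simp only [kempeGraph, or_comm]

theorem kempeGraph_adj_mem_iff (hS : IsStable G S) {u v : V} (h : (G.kempeGraph S T).Adj u v) :
    u ∈ S ↔ v ∉ S := by
  obtain ⟨huv, ⟨hu, -⟩ | ⟨-, hv⟩⟩ := h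
  · exact iff_of_true hu fun hv => hS u hu v hv huv
  · exact iff_of_false (fun hu => hS u hu v hv huv) (not_not_intro hv)

def kempeColoring [DecidablePred (· ∈ S)] (hS : IsStable G S) :
    (G.kempeGraph S T).Coloring Bool :=
  Coloring.mk (fun x => decide (x ∈ S)) fun h => by
    have := kempeGraph_adj_mem_iff hS h
    simp only [ne_eq, decide_eq_decide]
    tauto

theorem not_reachable_kempeGraph_of_odd {u v : V}
    (hodd : ∀ p : G.Walk u v, p.IsPath → Odd p.length)
    (hS : IsStable G S) (hu : u ∈ S) (hv : v ∈ S) : ¬ (G.kempeGraph S T).Reachable u v := by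
  classical
  rintro ⟨p⟩
  have hp_odd : Odd p.toPath.1.length := by
    simpa using hodd _ (p.toPath.2.mapLe kempeGraph_le)
  have hcol := ((kempeColoring (T := T) hS).odd_length_iff_not_congr _).1 hp_odd
  change ¬decide (u ∈ S) = true ↔ decide (v ∈ S) = true at hcol
  simp [hu, hv] at hcol

end SimpleGraph

theorem IsStable.ite {V : Type*} {G : SimpleGraph V} {S T C : Set V}
    (hS : IsStable G S) (hT : IsStable G T)
    (hC : ∀ ⦃x y⦄, (G.kempeGraph S T).Adj x y → x ∈ C → y ∈ C) :
    IsStable G (C.ite T S) := by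
  rintro u (⟨huT, huC⟩ | ⟨huS, huC⟩) v (⟨hvT, hvC⟩ | ⟨hvS, hvC⟩) huv
  · exact hT u huT v hvT huv
  · exact hvC (hC ⟨huv, .inr ⟨huT, hvS⟩⟩ huC)
  · exact huC (hC ⟨huv.symm, .inr ⟨hvT, huS⟩⟩ hvC)
  · exact hS u huS v hvS huv

namespace Set

variable {α : Type*}

theorem ite_union_ite_swap (t s s' : Set α) : t.ite s s' ∪ t.ite s' s = s ∪ s' := by
  ext x
  simp only [Set.ite, mem_union, mem_inter_iff, mem_sdiff]
  tauto

theorem ite_inter_ite_swap (t s s' : Set α) : t.ite s s' ∩ t.ite s' s = s ∩ s' := by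
  rw [← ite_inter_inter, inter_comm s' s, ite_same]

end Set

/-- if all `v₁`–`v₂` paths in `W` are odd, `S₁` is a stable set containing
both `v₁, v₂`, and `S₂` is a stable set containing neither, then there are stable sets
`S₃, S₄` meeting `{v₁,v₂}` exactly in `{v₁}` resp. `{v₂}`, with the same union and
intersection as `S₁, S₂`. -/
theorem stmt5 {V : Type*} (W : SimpleGraph V) (v₁ v₂ : V)
    (hodd : ∀ p : W.Walk v₁ v₂, p.IsPath → Odd p.length)
    (S₁ S₂ : Set V) (h₁ : IsStable W S₁) (h₂ : IsStable W S₂)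
    (h₁v : v₁ ∈ S₁ ∧ v₂ ∈ S₁) (h₂v : S₂ ∩ {v₁, v₂} = ∅) :
    ∃ S₃ S₄ : Set V, IsStable W S₃ ∧ IsStable W S₄ ∧
      S₃ ∩ {v₁, v₂} = {v₁} ∧ S₄ ∩ {v₁, v₂} = {v₂} ∧
      S₁ ∪ S₂ = S₃ ∪ S₄ ∧ S₁ ∩ S₂ = S₃ ∩ S₄ := by
  obtain ⟨hv₁S₁, hv₂S₁⟩ := h₁v
  have hv₁S₂ : v₁ ∉ S₂ := fun h => h₂v.subset ⟨h, .inl rfl⟩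
  have hv₂S₂ : v₂ ∉ S₂ := fun h => h₂v.subset ⟨h, .inr rfl⟩
  let C := {x | (W.kempeGraph S₁ S₂).Reachable v₁ x}
  have hC : ∀ ⦃x y⦄, (W.kempeGraph S₁ S₂).Adj x y → x ∈ C → y ∈ C :=
    fun _ _ hxy hx => hx.trans hxy.reachable
  have hv₁C : v₁ ∈ C := Reachable.refl v₁
  have hv₂C : v₂ ∉ C := not_reachable_kempeGraph_of_odd hodd h₁ hv₁S₁ hv₂S₁
  refine ⟨C.ite S₁ S₂, C.ite S₂ S₁, h₂.ite h₁ (kempeGraph_comm (G := W) ▸ hC), h₁.ite h₂ hC,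
    ?_, ?_, (Set.ite_union_ite_swap C S₁ S₂).symm, (Set.ite_inter_ite_swap C S₁ S₂).symm⟩ <;>
  · ext x
    simp only [Set.ite, Set.mem_inter_iff, Set.mem_union, Set.mem_sdiff, Set.mem_insert_iff,
      Set.mem_singleton_iff]
    grind
end

section
/- Let G be a graph with nonnegative rational edge costs c and let y ∈ Y(G) be a slack vector. Then there exists a stable set S in G such that c(σ(S)) ≤ Σ_e c(e) y_e, i.e., the minimum cost over slack vectors is attained by the characteristic vector of a slack set. -/
open SimpleGraph

open scoped Classical in
/-- for nonnegative edge costs `c` and any slack vector `y ∈ Y(G)` there is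
a stable set `S` whose slack set `σ(S)` has cost at most `Σ_e c(e) y_e`. -/
theorem stmt9 {V : Type*} [Fintype V] (G : SimpleGraph V)
    (c : Sym2 V → ℚ) (hc : ∀ e ∈ G.edgeSet, 0 ≤ c e)
    (y : Sym2 V → ℤ) (hy : ∀ e ∈ G.edgeSet, 0 ≤ y e)
    (hmem : ∃ x : V → ℤ, ∀ u v, G.Adj u v → y s(u, v) = 1 - x u - x v) :
    ∃ S : Finset V, IsStable G ↑S ∧
      (∑ e ∈ G.edgeFinset.filter (fun e => ∀ v ∈ e, v ∉ S), c e)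
        ≤ ∑ e ∈ G.edgeFinset, c e * (y e : ℚ) := by
  obtain ⟨x, hx⟩ := hmem
  refine ⟨Finset.univ.filter (fun v => 1 ≤ x v), ?_, ?_⟩
  · intro u hu v hv hadj
    simp only [Finset.coe_filter, Set.mem_setOf_eq] at hu hv
    have h1 := hx u v hadj
    have h2 := hy _ (G.mem_edgeSet.2 hadj)
    omega
  · calc ∑ e ∈ G.edgeFinset.filter
          (fun e => ∀ v ∈ e, v ∉ Finset.univ.filter (fun v => 1 ≤ x v)), c e
        ≤ ∑ e ∈ G.edgeFinset.filter
          (fun e => ∀ v ∈ e, v ∉ Finset.univ.filter (fun v => 1 ≤ x v)),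
            c e * (y e : ℚ) := by
          refine Finset.sum_le_sum ?_
          intro e he
          simp only [Finset.mem_filter, Finset.mem_univ, true_and, not_le,
            mem_edgeFinset] at he
          obtain ⟨he1, he2⟩ := he
          induction e with
          | h u v =>
            have hadj : G.Adj u v := G.mem_edgeSet.1 he1
            have hu : x u < 1 := he2 u (Sym2.mem_mk_left u v)
            have hv : x v < 1 := he2 v (Sym2.mem_mk_right u v)
            have hyge : (1 : ℤ) ≤ y s(u, v) := by rw [hx u v hadj]; omega
            have hcge := hc _ he1
            have : (1 : ℚ) ≤ (y s(u, v) : ℚ) := by exact_mod_cast hyge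
            nlinarith
      _ ≤ ∑ e ∈ G.edgeFinset, c e * (y e : ℚ) := by
          refine Finset.sum_le_sum_of_subset_of_nonneg (Finset.filter_subset _ _) ?_
          intro e he _
          rw [mem_edgeFinset] at he
          have := hc e he
          have := hy e he
          have : (0:ℚ) ≤ (y e : ℚ) := by exact_mod_cast this
          positivity
end

section
/- Let G be a connected bipartite graph. Then Y(G) equals the set of nonnegative integer vectors y on E(G) such that for every closed walk W = (v₀,e₁,v₁,...,e_ℓ,v_ℓ=v₀) of even length, the alternating sum ω_W(y) := Σ_{i=1}^ℓ (−1)^{i−1} y_{e_i} is zero. -/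
open SimpleGraph

/-- Alternating sum `Σ (-1)^(i-1) y_{e_i}` along a list of edges `e₁, e₂, …`. -/
def altSum {V : Type*} (y : Sym2 V → ℤ) : List (Sym2 V) → ℤ
  | [] => 0
  | e :: l => y e - altSum y l

lemma altSum_append {V : Type*} (y : Sym2 V → ℤ) (l₁ l₂ : List (Sym2 V)) :
    altSum y (l₁ ++ l₂) = altSum y l₁ + (-1 : ℤ)^l₁.length * altSum y l₂ := by
  induction l₁ with
  | nil => simp [altSum]
  | cons e t ih =>
    show y e - altSum y (t ++ l₂) =
      (y e - altSum y t) + (-1 : ℤ) ^ (t.length + 1) * altSum y l₂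
    rw [ih, pow_succ]; ring

lemma altSum_reverse {V : Type*} (y : Sym2 V → ℤ) (l : List (Sym2 V)) :
    altSum y l.reverse = (-1 : ℤ)^(l.length + 1) * altSum y l := by
  induction l with
  | nil => simp [altSum]
  | cons e t ih =>
    simp only [List.reverse_cons, altSum_append, ih, altSum, List.length_cons, pow_succ,
      List.length_reverse]
    ring

lemma walk_alt {V : Type*} {G : SimpleGraph V} (y : Sym2 V → ℤ) (x : V → ℤ)
    (hx : ∀ u v, G.Adj u v → y s(u, v) = 1 - x u - x v) :
    ∀ {u v : V} (p : G.Walk u v), altSum y p.edges =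
      if Even p.length then x v - x u else 1 - x u - x v := by
  intro u v p
  induction p with
  | nil => simp [altSum]
  | @cons u w v h q ih =>
    rw [SimpleGraph.Walk.edges_cons]
    show y s(u, w) - altSum y q.edges = _
    rw [ih, hx u w h, SimpleGraph.Walk.length_cons]
    by_cases hq : Even q.length
    · rw [if_pos hq, if_neg (by simp [Nat.even_add_one, hq])]; ring
    · rw [if_neg hq, if_pos (by simp [Nat.even_add_one, hq])]; ring

lemma walk_parity {V : Type*} {G : SimpleGraph V} (C : G.Coloring (Fin 2)) :
    ∀ {u v : V} (p : G.Walk u v), (Even p.length ↔ C u = C v) := by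
  intro u v p
  induction p with
  | nil => simp
  | @cons u w v h q ih =>
    have hne : C u ≠ C w := C.valid h
    have key : ∀ a b c : Fin 2, a ≠ b → ((¬ Even q.length ↔ ¬ (b = c)) ↔ True) →
        True := fun _ _ _ _ _ => trivial
    simp only [SimpleGraph.Walk.length_cons, Nat.even_add_one, ih]
    revert hne
    have : ∀ a b c : Fin 2, a ≠ b → (¬ b = c ↔ a = c) := by decide
    intro hne
    exact this _ _ _ hne

/-- in a connected bipartite graph `G`, a nonnegative integer vector `y` on
the edges is a slack vector (`y ∈ Y(G)`) iff the alternating sum of `y` along every even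
closed walk vanishes. -/
theorem stmt10 {V : Type*} (G : SimpleGraph V) (hconn : G.Connected)
    (hbip : G.Colorable 2) (y : Sym2 V → ℤ) :
    ((∀ e ∈ G.edgeSet, 0 ≤ y e) ∧
        ∃ x : V → ℤ, ∀ u v, G.Adj u v → y s(u, v) = 1 - x u - x v)
      ↔ ((∀ e ∈ G.edgeSet, 0 ≤ y e) ∧
        ∀ (u : V) (p : G.Walk u u), Even p.length → altSum y p.edges = 0) := by
  obtain ⟨C⟩ := hbip
  constructor
  · rintro ⟨hnn, x, hx⟩
    refine ⟨hnn, fun u p hp => ?_⟩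
    rw [walk_alt y x hx p, if_pos hp]
    ring
  · rintro ⟨hnn, hzero⟩
    refine ⟨hnn, ?_⟩
    haveI : Nonempty V := hconn.nonempty
    set r : V := Classical.arbitrary V with hr
    have pick : ∀ v : V, G.Walk r v := fun v => (hconn.preconnected r v).some
    set x : V → ℤ := fun v =>
      if Even (pick v).length then altSum y (pick v).edges
      else 1 - altSum y (pick v).edges with hxdef
    -- independence of choice of walk
    have indep : ∀ (v : V) (q : G.Walk r v),
        x v = if Even q.length then altSum y q.edges else 1 - altSum y q.edges := by
      intro v q
      set p : G.Walk r v := pick v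
      have hpar : (Even p.length ↔ Even q.length) := by
        rw [walk_parity C p, walk_parity C q]
      have hclosed := hzero r (q.append p.reverse)
      have hlen : (q.append p.reverse).length = q.length + p.length := by
        simp [SimpleGraph.Walk.length_append]
      have hedges : (q.append p.reverse).edges = q.edges ++ p.edges.reverse := by
        simp [SimpleGraph.Walk.edges_append, SimpleGraph.Walk.edges_reverse]
      have hplen : p.edges.length = p.length := SimpleGraph.Walk.length_edges p
      have heq : altSum y q.edges = altSum y p.edges := by
        by_cases hqe : Even q.length
        · have hpe : Even p.length := hpar.mpr hqe
          have hc := hclosed (by rw [hlen]; exact hqe.add hpe)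
          rw [hedges, altSum_append, altSum_reverse, hplen] at hc
          have h1 : ((-1 : ℤ)) ^ q.edges.length = 1 := by
            rw [SimpleGraph.Walk.length_edges]; exact hqe.neg_one_pow
          have h2 : ((-1 : ℤ)) ^ (p.length + 1) = -1 := by
            exact (hpe.add_one).neg_one_pow
          rw [h1, h2] at hc
          linarith
        · have hpe : ¬ Even p.length := fun h => hqe (hpar.mp h)
          have hc := hclosed (by
            rw [hlen]
            rcases Nat.not_even_iff_odd.mp hqe with ⟨a, ha⟩
            rcases Nat.not_even_iff_odd.mp hpe with ⟨b, hb⟩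
            exact ⟨a + b + 1, by omega⟩)
          rw [hedges, altSum_append, altSum_reverse, hplen] at hc
          have h1 : ((-1 : ℤ)) ^ q.edges.length = -1 := by
            rw [SimpleGraph.Walk.length_edges]
            exact (Nat.not_even_iff_odd.mp hqe).neg_one_pow
          have h2 : ((-1 : ℤ)) ^ (p.length + 1) = 1 := by
            refine Even.neg_one_pow ?_
            exact Nat.even_add_one.mpr hpe
          rw [h1, h2] at hc
          linarith
      have : x v = if Even p.length then altSum y p.edges else 1 - altSum y p.edges := rfl
      rw [this, heq]
      by_cases hqe : Even q.length
      · rw [if_pos (hpar.mpr hqe), if_pos hqe]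
      · rw [if_neg (fun h => hqe (hpar.mp h)), if_neg hqe]
    refine ⟨x, fun u v huv => ?_⟩
    have hu : x u = if Even (pick u).length then altSum y (pick u).edges
        else 1 - altSum y (pick u).edges := rfl
    set p : G.Walk r u := pick u
    have hq := indep v (p.concat huv)
    have hqlen : (p.concat huv).length = p.length + 1 := SimpleGraph.Walk.length_concat p huv
    have hqedges : (p.concat huv).edges = p.edges ++ [s(u, v)] := by
      rw [SimpleGraph.Walk.edges_concat, List.concat_eq_append]
    rw [hqlen, hqedges, altSum_append] at hq
    have hplen : p.edges.length = p.length := SimpleGraph.Walk.length_edges p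
    have haltsingle : altSum y [s(u, v)] = y s(u, v) := by simp [altSum]
    rw [hplen, haltsingle] at hq
    by_cases hpe : Even p.length
    · have hxu : x u = altSum y p.edges := by rw [hu, if_pos hpe]
      rw [if_neg (by simp [Nat.even_add_one, hpe]), hpe.neg_one_pow] at hq
      rw [hxu, hq]; ring
    · have hxu : x u = 1 - altSum y p.edges := by rw [hu, if_neg hpe]
      rw [if_pos (Nat.even_add_one.mpr hpe),
        (Nat.not_even_iff_odd.mp hpe).neg_one_pow] at hq
      rw [hxu, hq]; ring
end

section
/- Let G be a graph where every constraint is an edge constraint x_i + x_j ≤ b_{ij} (for edges ij of G) together with integer variable bounds ℓ ≤ x ≤ u, and suppose the integer program max{wᵀx : edge constraints, bounds, x integral} is feasible. Then for every extremal (vertex) optimal solution x* of the LP relaxation, there exists an optimal integral solution x̄ with ‖x* − x̄‖_∞ ≤ 1/2. -/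
open SimpleGraph

/-- Real feasibility for the system of edge constraints `x_i + x_j ≤ b_{ij}` and variable
bounds `lo ≤ x ≤ hi` associated to a graph `G`. -/
def FeasR {V : Type*} (G : SimpleGraph V) (b : Sym2 V → ℤ) (lo hi : V → ℤ)
    (x : V → ℝ) : Prop :=
  (∀ u v, G.Adj u v → x u + x v ≤ (b s(u, v) : ℝ)) ∧
    ∀ v, (lo v : ℝ) ≤ x v ∧ x v ≤ (hi v : ℝ)

/-- Integer feasibility for the same system. -/
def FeasZ {V : Type*} (G : SimpleGraph V) (b : Sym2 V → ℤ) (lo hi : V → ℤ)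
    (z : V → ℤ) : Prop :=
  (∀ u v, G.Adj u v → z u + z v ≤ b s(u, v)) ∧ ∀ v, lo v ≤ z v ∧ z v ≤ hi v

/-- A positive lower bound for finitely many positive reals. -/
lemma exists_pos_lb {α : Type*} (s : Finset α) (f : α → ℝ) (hf : ∀ a ∈ s, 0 < f a) :
    ∃ ε : ℝ, 0 < ε ∧ ∀ a ∈ s, ε ≤ f a := by
  classical
  induction s using Finset.induction_on with
  | empty => exact ⟨1, one_pos, fun a ha => absurd ha (Finset.notMem_empty a)⟩
  | @insert a s ha ih =>
    obtain ⟨ε, hε, hεle⟩ := ih (fun b hb => hf b (Finset.mem_insert_of_mem hb))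
    refine ⟨min ε (f a), lt_min hε (hf a (Finset.mem_insert_self a s)), ?_⟩
    intro c hc
    rcases Finset.mem_insert.mp hc with rfl | hc
    · exact min_le_right _ _
    · exact le_trans (min_le_left _ _) (hεle c hc)

/-- Small-step feasibility: if a direction `g` respects all tight constraints at a feasible
point `x`, then any small positive multiple of `g` can be added while staying feasible. -/
lemma small_step {V : Type*} [Fintype V] (G : SimpleGraph V) (b : Sym2 V → ℤ)
    (lo hi : V → ℤ) (x g : V → ℝ) (hx : FeasR G b lo hi x)
    (hg : ∀ v, |g v| ≤ 1)
    (hedge : ∀ u v, G.Adj u v → x u + x v = (b s(u, v) : ℝ) → g u + g v ≤ 0)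
    (hlo : ∀ v, x v = (lo v : ℝ) → 0 ≤ g v)
    (hhi : ∀ v, x v = (hi v : ℝ) → g v ≤ 0) :
    ∃ ε : ℝ, 0 < ε ∧ ∀ δ : ℝ, 0 ≤ δ → δ ≤ ε →
      FeasR G b lo hi (fun v => x v + δ * g v) := by
  classical
  obtain ⟨ε₁, hε₁, hε₁le⟩ := exists_pos_lb (Finset.univ ×ˢ Finset.univ : Finset (V × V))
    (fun p => if G.Adj p.1 p.2 ∧ x p.1 + x p.2 < (b s(p.1, p.2) : ℝ)
      then ((b s(p.1, p.2) : ℝ) - x p.1 - x p.2) / 2 else 1)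
    (by
      intro p _
      split_ifs with h
      · linarith [h.2]
      · norm_num)
  obtain ⟨ε₂, hε₂, hε₂le⟩ := exists_pos_lb (Finset.univ : Finset V)
    (fun v => if (lo v : ℝ) < x v then x v - (lo v : ℝ) else 1)
    (by
      intro v _
      split_ifs with h
      · linarith
      · norm_num)
  obtain ⟨ε₃, hε₃, hε₃le⟩ := exists_pos_lb (Finset.univ : Finset V)
    (fun v => if x v < (hi v : ℝ) then (hi v : ℝ) - x v else 1)
    (by
      intro v _
      split_ifs with h
      · linarith
      · norm_num)
  refine ⟨min ε₁ (min ε₂ ε₃), lt_min hε₁ (lt_min hε₂ hε₃), fun δ hδ0 hδε => ⟨?_, ?_⟩⟩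
  · intro u v huv
    show x u + δ * g u + (x v + δ * g v) ≤ (b s(u, v) : ℝ)
    have hb := hx.1 u v huv
    rcases eq_or_lt_of_le hb with ht | hlt
    · have hsum := hedge u v huv ht
      nlinarith
    · have h1 := hε₁le (u, v) (Finset.mem_product.mpr ⟨Finset.mem_univ _, Finset.mem_univ _⟩)
      rw [if_pos ⟨huv, hlt⟩] at h1
      have hδ : δ ≤ ((b s(u, v) : ℝ) - x u - x v) / 2 :=
        le_trans hδε (le_trans (min_le_left _ _) h1)
      have h2 : g u + g v ≤ 2 := by
        have := abs_le.mp (hg u); have := abs_le.mp (hg v); linarith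
      nlinarith
  · intro v
    constructor
    · show (lo v : ℝ) ≤ x v + δ * g v
      rcases eq_or_lt_of_le (hx.2 v).1 with ht | hlt
      · have h0 := hlo v ht.symm
        nlinarith
      · have h1 := hε₂le v (Finset.mem_univ v)
        rw [if_pos hlt] at h1
        have hδ : δ ≤ x v - (lo v : ℝ) :=
          le_trans hδε (le_trans (le_trans (min_le_right _ _) (min_le_left _ _)) h1)
        have h2 : (-1 : ℝ) ≤ g v := (abs_le.mp (hg v)).1
        nlinarith
    · show x v + δ * g v ≤ (hi v : ℝ)
      rcases eq_or_lt_of_le (hx.2 v).2 with ht | hlt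
      · have h0 := hhi v ht
        nlinarith
      · have h1 := hε₃le v (Finset.mem_univ v)
        rw [if_pos hlt] at h1
        have hδ : δ ≤ (hi v : ℝ) - x v :=
          le_trans hδε (le_trans (le_trans (min_le_right _ _) (min_le_right _ _)) h1)
        have h2 : g v ≤ 1 := (abs_le.mp (hg v)).2
        nlinarith

/-- Every extremal feasible point is half-integral. -/
lemma half_integral {V : Type*} [Fintype V] (G : SimpleGraph V) (b : Sym2 V → ℤ)
    (lo hi : V → ℤ) (x : V → ℝ) (hfeas : FeasR G b lo hi x)
    (hext : ∀ x₁ x₂ : V → ℝ, FeasR G b lo hi x₁ → FeasR G b lo hi x₂ →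
      (∀ v, x v = (x₁ v + x₂ v) / 2) → x₁ = x₂) :
    ∀ v, ∃ k : ℤ, 2 * x v = (k : ℝ) := by
  classical
  obtain ⟨d, hd0, hd1⟩ : ∃ d : V → ℝ,
      (∀ v, (∃ k : ℤ, 2 * x v = (k : ℝ)) → d v = 0) ∧
      (∀ v, ¬(∃ k : ℤ, 2 * x v = (k : ℝ)) → d v = Int.fract (x v) - 1/2) := by
    refine ⟨fun v => if (∃ k : ℤ, 2 * x v = (k : ℝ)) then 0 else Int.fract (x v) - 1/2,
      fun v h => if_pos h, fun v h => if_neg h⟩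
  have habs : ∀ v, |d v| ≤ 1 := by
    intro v
    by_cases h : ∃ k : ℤ, 2 * x v = (k : ℝ)
    · rw [hd0 v h]; norm_num
    · rw [hd1 v h]
      have h1 := Int.fract_nonneg (x v)
      have h2 := Int.fract_lt_one (x v)
      rw [abs_le]; constructor <;> linarith
  have htight : ∀ u v, G.Adj u v → x u + x v = (b s(u, v) : ℝ) → d u + d v = 0 := by
    intro u v huv ht
    by_cases hu : ∃ k : ℤ, 2 * x u = (k : ℝ)
    · by_cases hv : ∃ k : ℤ, 2 * x v = (k : ℝ)
      · rw [hd0 u hu, hd0 v hv]; ring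
      · exfalso; apply hv
        obtain ⟨k, hk⟩ := hu
        exact ⟨2 * b s(u, v) - k, by push_cast; linarith⟩
    · by_cases hv : ∃ k : ℤ, 2 * x v = (k : ℝ)
      · exfalso; apply hu
        obtain ⟨k, hk⟩ := hv
        exact ⟨2 * b s(u, v) - k, by push_cast; linarith⟩
      · rw [hd1 u hu, hd1 v hv]
        have hfr : Int.fract (x u) + Int.fract (x v) = 1 := by
          have e1 : Int.fract (x u) = x u - ⌊x u⌋ := rfl
          have e2 : Int.fract (x v) = x v - ⌊x v⌋ := rfl
          have h1 := Int.fract_nonneg (x u)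
          have h2 := Int.fract_lt_one (x u)
          have h3 := Int.fract_nonneg (x v)
          have h4 := Int.fract_lt_one (x v)
          have hsum : Int.fract (x u) + Int.fract (x v)
              = ((b s(u, v) - ⌊x u⌋ - ⌊x v⌋ : ℤ) : ℝ) := by
            rw [e1, e2]; push_cast; linarith
          have ht0 : (0 : ℝ) ≤ ((b s(u, v) - ⌊x u⌋ - ⌊x v⌋ : ℤ) : ℝ) := by
            rw [← hsum]; linarith
          have ht2 : ((b s(u, v) - ⌊x u⌋ - ⌊x v⌋ : ℤ) : ℝ) < 2 := by
            rw [← hsum]; linarith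
          have ht0' : (0 : ℤ) ≤ b s(u, v) - ⌊x u⌋ - ⌊x v⌋ := by exact_mod_cast ht0
          have ht2' : b s(u, v) - ⌊x u⌋ - ⌊x v⌋ < 2 := by exact_mod_cast ht2
          have hcases : b s(u, v) - ⌊x u⌋ - ⌊x v⌋ = 0 ∨ b s(u, v) - ⌊x u⌋ - ⌊x v⌋ = 1 := by omega
          rcases hcases with hc | hc
          · exfalso
            apply hu
            rw [hc] at hsum
            have hfu : Int.fract (x u) = 0 := by
              simp only [Int.cast_zero] at hsum
              linarith
            refine ⟨2 * ⌊x u⌋, ?_⟩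
            rw [e1] at hfu
            push_cast
            linarith
          · rw [hc] at hsum
            simp only [Int.cast_one] at hsum
            exact hsum
        linarith
  have hdlo : ∀ v, x v = (lo v : ℝ) → d v = 0 := by
    intro v hv
    exact hd0 v ⟨2 * lo v, by rw [hv]; push_cast; ring⟩
  have hdhi : ∀ v, x v = (hi v : ℝ) → d v = 0 := by
    intro v hv
    exact hd0 v ⟨2 * hi v, by rw [hv]; push_cast; ring⟩
  obtain ⟨ε₁, hε₁, h₁⟩ := small_step G b lo hi x d hfeas habs
    (fun u v huv ht => le_of_eq (htight u v huv ht))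
    (fun v hv => le_of_eq (hdlo v hv).symm)
    (fun v hv => le_of_eq (hdhi v hv))
  obtain ⟨ε₂, hε₂, h₂⟩ := small_step G b lo hi x (fun v => -d v) hfeas
    (fun v => by simpa using habs v)
    (fun u v huv ht => by
      have h := htight u v huv ht
      show -d u + -d v ≤ 0
      linarith)
    (fun v hv => by
      show (0:ℝ) ≤ -d v
      rw [hdlo v hv]; norm_num)
    (fun v hv => by
      show -d v ≤ (0:ℝ)
      rw [hdhi v hv]; norm_num)
  have hεpos : 0 < min ε₁ ε₂ := lt_min hε₁ hε₂
  have hf1 : FeasR G b lo hi (fun v => x v + min ε₁ ε₂ * d v) :=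
    h₁ _ (le_of_lt hεpos) (min_le_left _ _)
  have hf2 : FeasR G b lo hi (fun v => x v + min ε₁ ε₂ * (-d v)) :=
    h₂ _ (le_of_lt hεpos) (min_le_right _ _)
  have heq := hext _ _ hf1 hf2 (fun v => by
    show x v = ((x v + min ε₁ ε₂ * d v) + (x v + min ε₁ ε₂ * (-d v))) / 2
    ring)
  have hdzero : ∀ v, d v = 0 := by
    intro v
    have h : x v + min ε₁ ε₂ * d v = x v + min ε₁ ε₂ * (-d v) := congrFun heq v
    have h2 : min ε₁ ε₂ * d v = 0 := by linarith
    exact (mul_eq_zero.mp h2).resolve_left (ne_of_gt hεpos)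
  intro v
  by_contra h
  have h1 := hd1 v h
  have h2 := hdzero v
  apply h
  refine ⟨2 * ⌊x v⌋ + 1, ?_⟩
  have e1 : Int.fract (x v) = x v - ⌊x v⌋ := rfl
  rw [h1, e1] at h2
  push_cast
  linarith

/-- for a feasible integer program given by edge constraints and variable
bounds on a graph `G`, every extremal (vertex) optimal solution `x*` of the LP
relaxation is within `ℓ∞`-distance `1/2` of some optimal integral solution. -/
theorem stmt15 {V : Type*} [Fintype V] (G : SimpleGraph V)
    (b : Sym2 V → ℤ) (lo hi : V → ℤ) (w : V → ℝ)
    (hIPfeas : ∃ z : V → ℤ, FeasZ G b lo hi z)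
    (xstar : V → ℝ) (hfeas : FeasR G b lo hi xstar)
    (hopt : ∀ x : V → ℝ, FeasR G b lo hi x → ∑ v, w v * x v ≤ ∑ v, w v * xstar v)
    (hext : ∀ x₁ x₂ : V → ℝ, FeasR G b lo hi x₁ → FeasR G b lo hi x₂ →
      (∀ v, xstar v = (x₁ v + x₂ v) / 2) → x₁ = x₂) :
    ∃ xbar : V → ℤ, FeasZ G b lo hi xbar ∧
      (∀ z : V → ℤ, FeasZ G b lo hi z →
        ∑ v, w v * (z v : ℝ) ≤ ∑ v, w v * (xbar v : ℝ)) ∧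
      ∀ v, |xstar v - (xbar v : ℝ)| ≤ 1 / 2 := by
  classical
  obtain ⟨z₀, hz₀⟩ := hIPfeas
  have hhalf := half_integral G b lo hi xstar hfeas hext
  have hfin : {z : V → ℤ | FeasZ G b lo hi z}.Finite := by
    apply Set.Finite.subset (Set.Finite.pi (fun v => Set.finite_Icc (lo v) (hi v)))
    intro z hz
    rw [Set.mem_pi]
    intro v _
    exact Set.mem_Icc.mpr ⟨(hz.2 v).1, (hz.2 v).2⟩
  have hmemF1 : ∀ z : V → ℤ, z ∈ hfin.toFinset ↔ FeasZ G b lo hi z := by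
    intro z; rw [Set.Finite.mem_toFinset]; rfl
  have hF1ne : hfin.toFinset.Nonempty := ⟨z₀, (hmemF1 z₀).mpr hz₀⟩
  obtain ⟨zmax, hzmaxmem, hzmax⟩ :=
    hfin.toFinset.exists_max_image (fun z => ∑ v, w v * (z v : ℝ)) hF1ne
  have hF2ne : (hfin.toFinset.filter
      (fun z => ∀ z' ∈ hfin.toFinset,
        ∑ v, w v * (z' v : ℝ) ≤ ∑ v, w v * (z v : ℝ))).Nonempty :=
    ⟨zmax, Finset.mem_filter.mpr ⟨hzmaxmem, hzmax⟩⟩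
  obtain ⟨zb, hzbF2, hzbmin⟩ :=
    Finset.exists_min_image _ (fun z => ∑ v, |(z v : ℝ) - xstar v|) hF2ne
  obtain ⟨hzbF1, hzbopt⟩ := Finset.mem_filter.mp hzbF2
  have hzbfeas : FeasZ G b lo hi zb := (hmemF1 zb).mp hzbF1
  -- key claim: proximity < 1
  have hclose : ∀ v, |(zb v : ℝ) - xstar v| < 1 := by
    by_contra hcon
    push_neg at hcon
    obtain ⟨u, hu⟩ := hcon
    obtain ⟨g, hgcases⟩ : ∃ g : V → ℤ, ∀ v,
        (g v = 1 ∧ 1 ≤ (zb v : ℝ) - xstar v) ∨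
        (g v = -1 ∧ (zb v : ℝ) - xstar v ≤ -1) ∨
        (g v = 0 ∧ -1 < (zb v : ℝ) - xstar v ∧ (zb v : ℝ) - xstar v < 1) := by
      refine ⟨fun v => if 1 ≤ (zb v : ℝ) - xstar v then 1
        else if (zb v : ℝ) - xstar v ≤ -1 then -1 else 0, fun v => ?_⟩
      dsimp only
      by_cases h1 : 1 ≤ (zb v : ℝ) - xstar v
      · exact Or.inl ⟨if_pos h1, h1⟩
      · by_cases h2 : (zb v : ℝ) - xstar v ≤ -1
        · refine Or.inr (Or.inl ⟨?_, h2⟩)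
          rw [if_neg h1, if_pos h2]
        · refine Or.inr (Or.inr ⟨?_, ?_, ?_⟩)
          · rw [if_neg h1, if_neg h2]
          · push_neg at h2; exact h2
          · push_neg at h1; exact h1
    -- integer feasibility of zb - g
    have hznew : FeasZ G b lo hi (fun v => zb v - g v) := by
      constructor
      · intro p q hpq
        show zb p - g p + (zb q - g q) ≤ b s(p, q)
        have hz := hzbfeas.1 p q hpq
        have hx := hfeas.1 p q hpq
        rcases hgcases p with ⟨hp, hp'⟩ | ⟨hp, hp'⟩ | ⟨hp, hp1, hp2⟩ <;>
          rcases hgcases q with ⟨hq, hq'⟩ | ⟨hq, hq'⟩ | ⟨hq, hq1, hq2⟩ <;>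
          rw [hp, hq]
        · omega
        · omega
        · omega
        · omega
        · -- g p = -1, g q = -1
          have hr : ((zb p + zb q + 2 : ℤ) : ℝ) ≤ ((b s(p, q) : ℤ) : ℝ) := by
            push_cast; linarith
          have := Int.cast_le.mp hr
          omega
        · -- g p = -1, g q = 0
          have hr : ((zb p + zb q : ℤ) : ℝ) < ((b s(p, q) : ℤ) : ℝ) := by
            push_cast; linarith
          have := Int.cast_lt.mp hr
          omega
        · omega
        · -- g p = 0, g q = -1
          have hr : ((zb p + zb q : ℤ) : ℝ) < ((b s(p, q) : ℤ) : ℝ) := by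
            push_cast; linarith
          have := Int.cast_lt.mp hr
          omega
        · omega
      · intro v
        have hzv := hzbfeas.2 v
        have hxv := hfeas.2 v
        constructor
        · show lo v ≤ zb v - g v
          rcases hgcases v with ⟨hv, hv'⟩ | ⟨hv, hv'⟩ | ⟨hv, hv1, hv2⟩ <;> rw [hv]
          · have hr : ((lo v + 1 : ℤ) : ℝ) ≤ ((zb v : ℤ) : ℝ) := by
              push_cast; linarith [hxv.1]
            have := Int.cast_le.mp hr
            omega
          · omega
          · omega
        · show zb v - g v ≤ hi v
          rcases hgcases v with ⟨hv, hv'⟩ | ⟨hv, hv'⟩ | ⟨hv, hv1, hv2⟩ <;> rw [hv]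
          · omega
          · have hr : ((zb v + 1 : ℤ) : ℝ) ≤ ((hi v : ℤ) : ℝ) := by
              push_cast; linarith [hxv.2]
            have := Int.cast_le.mp hr
            omega
          · omega
    -- conditions of small_step for the direction g at xstar
    have hzr : ∀ p q, G.Adj p q → ((zb p : ℝ)) + ((zb q : ℝ)) ≤ ((b s(p, q) : ℤ) : ℝ) := by
      intro p q hpq
      have := hzbfeas.1 p q hpq
      have hr : ((zb p + zb q : ℤ) : ℝ) ≤ ((b s(p, q) : ℤ) : ℝ) := by exact_mod_cast this
      push_cast at hr
      linarith
    have hedge : ∀ p q, G.Adj p q → xstar p + xstar q = (b s(p, q) : ℝ) →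
        ((g p : ℝ)) + ((g q : ℝ)) ≤ 0 := by
      intro p q hpq ht
      have hz := hzr p q hpq
      rcases hgcases p with ⟨hp, hp'⟩ | ⟨hp, hp'⟩ | ⟨hp, hp1, hp2⟩ <;>
        rcases hgcases q with ⟨hq, hq'⟩ | ⟨hq, hq'⟩ | ⟨hq, hq1, hq2⟩ <;>
        rw [hp, hq] <;> push_cast
      · exfalso; linarith
      · norm_num
      · exfalso; linarith
      · norm_num
      · norm_num
      · norm_num
      · exfalso; linarith
      · norm_num
      · norm_num
    have hglo : ∀ v, xstar v = (lo v : ℝ) → 0 ≤ ((g v : ℝ)) := by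
      intro v hv
      rcases hgcases v with ⟨hvv, hv'⟩ | ⟨hvv, hv'⟩ | ⟨hvv, hv1, hv2⟩ <;> rw [hvv] <;> push_cast
      · norm_num
      · exfalso
        have h1 : ((lo v : ℤ) : ℝ) ≤ ((zb v : ℤ) : ℝ) := by exact_mod_cast (hzbfeas.2 v).1
        linarith
      · norm_num
    have hghi : ∀ v, xstar v = (hi v : ℝ) → ((g v : ℝ)) ≤ 0 := by
      intro v hv
      rcases hgcases v with ⟨hvv, hv'⟩ | ⟨hvv, hv'⟩ | ⟨hvv, hv1, hv2⟩ <;> rw [hvv] <;> push_cast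
      · exfalso
        have h1 : ((zb v : ℤ) : ℝ) ≤ ((hi v : ℤ) : ℝ) := by exact_mod_cast (hzbfeas.2 v).2
        linarith
      · norm_num
      · norm_num
    have hgabs : ∀ v, |((g v : ℝ))| ≤ 1 := by
      intro v
      rcases hgcases v with ⟨hvv, -⟩ | ⟨hvv, -⟩ | ⟨hvv, -⟩ <;> rw [hvv] <;> norm_num
    obtain ⟨ε, hεpos, hεfeas⟩ := small_step G b lo hi xstar (fun v => (g v : ℝ)) hfeas
      hgabs hedge hglo hghi
    have hfeasnew : FeasR G b lo hi (fun v => xstar v + ε * ((g v : ℝ))) :=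
      hεfeas ε (le_of_lt hεpos) (le_refl ε)
    -- from LP optimality: ∑ w * g ≤ 0
    have hwg : ∑ v, w v * ((g v : ℝ)) ≤ 0 := by
      have h1 := hopt _ hfeasnew
      have h2 : ∑ v, w v * (xstar v + ε * ((g v : ℝ))) =
          ∑ v, w v * xstar v + ε * ∑ v, w v * ((g v : ℝ)) := by
        rw [Finset.mul_sum, ← Finset.sum_add_distrib]
        exact Finset.sum_congr rfl (fun v _ => by ring)
      rw [h2] at h1
      nlinarith
    -- zb - g is also optimal
    have hsumnew : ∑ v, w v * (((fun v => zb v - g v) v : ℤ) : ℝ) =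
        ∑ v, w v * ((zb v : ℝ)) - ∑ v, w v * ((g v : ℝ)) := by
      rw [← Finset.sum_sub_distrib]
      exact Finset.sum_congr rfl (fun v _ => by push_cast; ring)
    have hznewF2 : (fun v => zb v - g v) ∈ hfin.toFinset.filter
        (fun z => ∀ z' ∈ hfin.toFinset,
          ∑ v, w v * (z' v : ℝ) ≤ ∑ v, w v * (z v : ℝ)) := by
      rw [Finset.mem_filter]
      refine ⟨(hmemF1 _).mpr hznew, ?_⟩
      intro z' hz'
      have h3 := hzbopt z' hz'
      rw [hsumnew]
      linarith
    -- but zb - g is strictly closer to xstar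
    have hpoint : ∀ v, |(((fun v => zb v - g v) v : ℤ) : ℝ) - xstar v| =
        |(zb v : ℝ) - xstar v| - |((g v : ℝ))| := by
      intro v
      show |((zb v - g v : ℤ) : ℝ) - xstar v| = _
      rcases hgcases v with ⟨hvv, hv'⟩ | ⟨hvv, hv'⟩ | ⟨hvv, hv1, hv2⟩ <;> rw [hvv] <;> push_cast
      · rw [abs_of_nonneg (by linarith : (0:ℝ) ≤ (zb v : ℝ) - 1 - xstar v),
          abs_of_nonneg (by linarith : (0:ℝ) ≤ (zb v : ℝ) - xstar v)]
        rw [abs_one]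
        ring
      · rw [show (zb v : ℝ) - (-1 : ℝ) - xstar v = ((zb v : ℝ) - xstar v) + 1 by ring,
          abs_of_nonpos (by linarith : ((zb v : ℝ) - xstar v) + 1 ≤ 0),
          abs_of_nonpos (by linarith : (zb v : ℝ) - xstar v ≤ 0)]
        rw [abs_neg, abs_one]
        ring
      · norm_num
    have hsumpsi : ∑ v, |(((fun v => zb v - g v) v : ℤ) : ℝ) - xstar v| =
        ∑ v, |(zb v : ℝ) - xstar v| - ∑ v, |((g v : ℝ))| := by
      rw [← Finset.sum_sub_distrib]
      exact Finset.sum_congr rfl (fun v _ => hpoint v)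
    have hgu : (1 : ℝ) ≤ |((g u : ℝ))| := by
      rcases hgcases u with ⟨huu, hu'⟩ | ⟨huu, hu'⟩ | ⟨huu, hu1, hu2⟩ <;> rw [huu] <;> push_cast
      · norm_num
      · norm_num
      · exfalso
        have habs' : |(zb u : ℝ) - xstar u| < 1 := abs_lt.mpr ⟨hu1, hu2⟩
        linarith
    have hgsum : (1 : ℝ) ≤ ∑ v, |((g v : ℝ))| := by
      refine le_trans hgu ?_
      exact Finset.single_le_sum (f := fun v => |((g v : ℝ))|)
        (fun v _ => abs_nonneg _) (Finset.mem_univ u)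
    have hmin := hzbmin _ hznewF2
    rw [hsumpsi] at hmin
    linarith
  -- conclude using half-integrality
  refine ⟨zb, hzbfeas, ?_, ?_⟩
  · intro z hz
    exact hzbopt z ((hmemF1 z).mpr hz)
  · intro v
    obtain ⟨k, hk⟩ := hhalf v
    have hc := hclose v
    have hmr : |((k - 2 * zb v : ℤ) : ℝ)| < 2 := by
      have he : ((k - 2 * zb v : ℤ) : ℝ) = 2 * (xstar v - (zb v : ℝ)) := by
        push_cast; linarith
      rw [he, abs_mul, abs_two]
      rw [abs_sub_comm] at hc
      linarith
    have hm2 : |k - 2 * zb v| < 2 := by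
      have h1 : ((|k - 2 * zb v| : ℤ) : ℝ) < 2 := by
        rw [Int.cast_abs]; exact hmr
      exact_mod_cast h1
    have hm1 : |k - 2 * zb v| ≤ 1 := by omega
    have hx : xstar v - (zb v : ℝ) = ((k - 2 * zb v : ℤ) : ℝ) / 2 := by
      push_cast; linarith
    rw [hx, abs_div, abs_two]
    have h2 : |((k - 2 * zb v : ℤ) : ℝ)| ≤ 1 := by
      have h3 : ((|k - 2 * zb v| : ℤ) : ℝ) ≤ 1 := by exact_mod_cast hm1
      rw [Int.cast_abs] at h3
      exact h3
    linarith
end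

section
/- Let H be a graph with two specified vertices v₁ and v₂ such that all v₁–v₂ paths in H have the same parity p, and suppose H contains both a stable set containing both v₁ and v₂ and a stable set containing neither, with p odd. Then (combining with the identity w(S) + c(σ(S)) = c(E)) for any nonnegative edge costs c, the minimum slack-cost over stable sets S with S ∩ {v₁,v₂} = {v₁} plus the minimum over those with S ∩ {v₁,v₂} = {v₂} is at most the minimum over those with S ∩ {v₁,v₂} = {v₁,v₂} plus the minimum over those with S ∩ {v₁,v₂} = ∅. -/
open SimpleGraph

open scoped Classical in
/-- The slack-cost of a vertex set `S`: total cost of the edges with no endpoint in `S`. -/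
noncomputable def slackCost {V : Type*} [Fintype V] (H : SimpleGraph V)
    (c : Sym2 V → ℝ) (S : Set V) : ℝ :=
  ∑ e ∈ H.edgeFinset.filter (fun e => ∀ v ∈ e, v ∉ S), c e

/-- Minimum (infimum) slack-cost of a stable set `S` with `S ∩ {v₁, v₂} = I`. -/
noncomputable def minSlackCost {V : Type*} [Fintype V] (H : SimpleGraph V)
    (c : Sym2 V → ℝ) (v₁ v₂ : V) (I : Set V) : ℝ :=
  sInf {r : ℝ | ∃ S : Set V, IsStable H S ∧ S ∩ {v₁, v₂} = I ∧ r = slackCost H c S}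

/-!
Let `A` be a stable set containing `v₁, v₂` and `B` one avoiding both, and let `C` be the
component of `v₁` in `H[A ∆ B]`. Swapping `A` and `B` on `C` gives the stable sets
`S = (B \ C) ∪ (A ∩ C) ∋ v₁` and `T = (A \ C) ∪ (B ∩ C) ∋ v₂`: indeed `v₂ ∉ C`, since a walk
inside `A ∆ B` alternates between `A` and `B`, so a `v₁`–`v₂` path there would be even.
As `S ∪ T = A ∪ B` and no edge of `H[A ∆ B]` leaves `C`, the slack sets satisfy
`σ S ∪ σ T ⊆ σ A ∪ σ B` and `σ S ∩ σ T = σ A ∩ σ B`, hence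
`c(σ S) + c(σ T) ≤ c(σ A) + c(σ B)`; taking infima over `A` and `B` gives the claim.
-/

open scoped symmDiff

lemma Finset.sum_add_sum_le_sum_add_sum {α : Type*} [DecidableEq α] {s₁ s₂ t₁ t₂ : Finset α}
    {f : α → ℝ} (hunion : s₁ ∪ s₂ ⊆ t₁ ∪ t₂) (hinter : s₁ ∩ s₂ ⊆ t₁ ∩ t₂)
    (hf : ∀ x ∈ t₁ ∪ t₂, 0 ≤ f x) :
    ∑ x ∈ s₁, f x + ∑ x ∈ s₂, f x ≤ ∑ x ∈ t₁, f x + ∑ x ∈ t₂, f x := by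
  rw [← Finset.sum_union_inter, ← Finset.sum_union_inter (s₁ := t₁)]
  gcongr ?_ + ?_
  · exact Finset.sum_le_sum_of_subset_of_nonneg hunion fun x hx _ => hf x hx
  · exact Finset.sum_le_sum_of_subset_of_nonneg hinter fun x hx _ =>
      hf x (Finset.mem_union_left _ (Finset.mem_inter.mp hx).1)

lemma le_csInf_add_csInf {s t : Set ℝ} {m : ℝ} (hs : s.Nonempty) (ht : t.Nonempty)
    (h : ∀ a ∈ s, ∀ b ∈ t, m ≤ a + b) : m ≤ sInf s + sInf t := by
  have hsub : ∀ a ∈ s, m - a ≤ sInf t := fun a ha =>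
    le_csInf ht fun b hb => by linarith [h a ha b hb]
  have : m - sInf t ≤ sInf s := le_csInf hs fun a ha => by linarith [hsub a ha]
  linarith

section Caps

variable {α : Type*} {S : Set α} {a b : α}

lemma Set.inter_pair_eq_singleton_left (ha : a ∈ S) (hb : b ∉ S) : S ∩ {a, b} = {a} := by
  rw [Set.inter_insert_of_mem ha, Set.inter_singleton_eq_empty.mpr hb, insert_empty_eq]

lemma Set.inter_pair_eq_singleton_right (ha : a ∉ S) (hb : b ∈ S) : S ∩ {a, b} = {b} := by
  rw [Set.inter_insert_of_notMem ha, Set.inter_singleton_of_mem hb]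

lemma Set.mem_of_inter_pair_eq_pair (h : S ∩ {a, b} = {a, b}) : a ∈ S ∧ b ∈ S :=
  Set.insert_subset_iff.mp (Set.inter_eq_right.mp h) |>.imp_right Set.singleton_subset_iff.mp

lemma Set.notMem_of_inter_pair_eq_empty (h : S ∩ {a, b} = ∅) : a ∉ S ∧ b ∉ S := by
  simpa [Set.disjoint_insert_right] using Set.disjoint_iff_inter_eq_empty.mpr h

end Caps

section SwapOn

variable {V : Type*} {H : SimpleGraph V} {A B C : Set V}

def swapOn (A B C : Set V) : Set V := (A \ C) ∪ (B ∩ C)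

lemma swapOn_union_swapOn : swapOn A B C ∪ swapOn B A C = A ∪ B := by
  ext x
  simp only [swapOn, Set.mem_union, Set.mem_sdiff, Set.mem_inter_iff]
  tauto

lemma isStable_swapOn (hA : IsStable H A) (hB : IsStable H B)
    (hC : ∀ x y, H.Adj x y → x ∈ A ∆ B → y ∈ A ∆ B → (x ∈ C ↔ y ∈ C)) :
    IsStable H (swapOn A B C) := by
  intro x hx y hy hxy
  have hxyA : ¬(x ∈ A ∧ y ∈ A) := fun h => hA x h.1 y h.2 hxy
  have hxyB : ¬(x ∈ B ∧ y ∈ B) := fun h => hB x h.1 y h.2 hxy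
  have hxyC := hC x y hxy
  simp only [swapOn, Set.mem_union, Set.mem_sdiff, Set.mem_inter_iff, Set.mem_symmDiff] at *
  tauto

end SwapOn

section ReachableWithin

variable {V : Type*} {H : SimpleGraph V} {D : Set V} {u x y : V}

variable (H) in
def reachableWithin (D : Set V) (u : V) : Set V :=
  {x | ∃ w : H.Walk u x, ∀ y ∈ w.support, y ∈ D}

lemma mem_reachableWithin_of_adj (hx : x ∈ reachableWithin H D u) (hy : y ∈ D)
    (hxy : H.Adj x y) : y ∈ reachableWithin H D u := by
  obtain ⟨w, hw⟩ := hx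
  refine ⟨w.concat hxy, fun z hz => ?_⟩
  rw [Walk.support_concat, List.mem_append, List.mem_singleton] at hz
  obtain hz | rfl := hz
  exacts [hw z hz, hy]

lemma mem_reachableWithin_iff_of_adj (hx : x ∈ D) (hy : y ∈ D) (hxy : H.Adj x y) :
    x ∈ reachableWithin H D u ↔ y ∈ reachableWithin H D u :=
  ⟨(mem_reachableWithin_of_adj · hy hxy), (mem_reachableWithin_of_adj · hx hxy.symm)⟩

end ReachableWithin

lemma even_length_iff_of_support_subset_symmDiff {V : Type*} {H : SimpleGraph V} {A B : Set V}
    (hA : IsStable H A) (hB : IsStable H B) {a b : V} (w : H.Walk a b)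
    (hw : ∀ y ∈ w.support, y ∈ A ∆ B) : Even w.length ↔ (a ∈ A ↔ b ∈ A) := by
  induction w with
  | nil => simp
  | @cons u x _ hux w ih =>
    have hu := hw u (by simp)
    have hx := hw x (by simp)
    have huxA : ¬(u ∈ A ∧ x ∈ A) := fun h => hA u h.1 x h.2 hux
    have huxB : ¬(u ∈ B ∧ x ∈ B) := fun h => hB u h.1 x h.2 hux
    rw [Set.mem_symmDiff] at hu hx
    rw [Walk.length_cons, Nat.even_add_one, ih fun y hy => hw y (by simp [hy])]
    tauto

section SlackEdges

variable {V : Type*} [Fintype V] (H : SimpleGraph V)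

open scoped Classical in
noncomputable def slackEdges (S : Set V) : Finset (Sym2 V) :=
  H.edgeFinset.filter fun e => ∀ v ∈ e, v ∉ S

lemma slackCost_eq_sum_slackEdges (c : Sym2 V → ℝ) (S : Set V) :
    slackCost H c S = ∑ e ∈ slackEdges H S, c e := rfl

variable {H}

@[simp]
lemma mem_slackEdges {S : Set V} {e : Sym2 V} :
    e ∈ slackEdges H S ↔ e ∈ H.edgeSet ∧ ∀ v ∈ e, v ∉ S := by
  simp [slackEdges]

variable [DecidableEq V]

lemma slackEdges_inter_slackEdges (S T : Set V) :
    slackEdges H S ∩ slackEdges H T = slackEdges H (S ∪ T) := by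
  ext e
  simp only [Finset.mem_inter, mem_slackEdges, Set.mem_union, not_or]
  grind

lemma slackEdges_swapOn_subset {A B C : Set V} (hA : IsStable H A) (hB : IsStable H B)
    (hC : ∀ x y, H.Adj x y → x ∈ A ∆ B → y ∈ A ∆ B → (x ∈ C ↔ y ∈ C)) :
    slackEdges H (swapOn A B C) ⊆ slackEdges H A ∪ slackEdges H B := by
  intro e he
  induction e using Sym2.ind with
  | _ x y =>
  have hxyA : ¬(x ∈ A ∧ y ∈ A) := fun h => hA x h.1 y h.2 (mem_slackEdges.mp he).1
  have hxyB : ¬(x ∈ B ∧ y ∈ B) := fun h => hB x h.1 y h.2 (mem_slackEdges.mp he).1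
  have hxyC := hC x y (mem_slackEdges.mp he).1
  simp only [Finset.mem_union, mem_slackEdges, Sym2.forall_mem_pair, swapOn, Set.mem_union,
    Set.mem_sdiff, Set.mem_inter_iff, Set.mem_symmDiff, SimpleGraph.mem_edgeSet] at *
  tauto

end SlackEdges

section Exchange

variable {V : Type*} [Fintype V] {H : SimpleGraph V} {A B C : Set V}

lemma slackCost_swapOn_add_slackCost_swapOn_le {c : Sym2 V → ℝ}
    (hc : ∀ e ∈ H.edgeSet, 0 ≤ c e) (hA : IsStable H A) (hB : IsStable H B)
    (hC : ∀ x y, H.Adj x y → x ∈ A ∆ B → y ∈ A ∆ B → (x ∈ C ↔ y ∈ C)) :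
    slackCost H c (swapOn B A C) + slackCost H c (swapOn A B C)
      ≤ slackCost H c A + slackCost H c B := by
  have hC' : ∀ x y, H.Adj x y → x ∈ B ∆ A → y ∈ B ∆ A → (x ∈ C ↔ y ∈ C) := by
    simpa only [symmDiff_comm B A] using hC
  classical
  simp only [slackCost_eq_sum_slackEdges]
  apply Finset.sum_add_sum_le_sum_add_sum
  · refine Finset.union_subset ?_ (slackEdges_swapOn_subset hA hB hC)
    rw [Finset.union_comm]
    exact slackEdges_swapOn_subset hB hA hC'
  · rw [slackEdges_inter_slackEdges, slackEdges_inter_slackEdges, swapOn_union_swapOn,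
      Set.union_comm]
  · intro e he
    obtain he | he := Finset.mem_union.mp he <;> exact hc e (mem_slackEdges.mp he).1

lemma exists_isStable_slackCost_add_le {v₁ v₂ : V}
    (hodd : ∀ p : H.Walk v₁ v₂, p.IsPath → Odd p.length)
    {c : Sym2 V → ℝ} (hc : ∀ e ∈ H.edgeSet, 0 ≤ c e)
    (hA : IsStable H A) (hB : IsStable H B) (hv₁A : v₁ ∈ A) (hv₂A : v₂ ∈ A)
    (hv₁B : v₁ ∉ B) (hv₂B : v₂ ∉ B) :
    ∃ S T : Set V, IsStable H S ∧ IsStable H T ∧ S ∩ {v₁, v₂} = {v₁} ∧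
      T ∩ {v₁, v₂} = {v₂} ∧
      slackCost H c S + slackCost H c T ≤ slackCost H c A + slackCost H c B := by
  let C := reachableWithin H (A ∆ B) v₁
  have hC : ∀ x y, H.Adj x y → x ∈ A ∆ B → y ∈ A ∆ B → (x ∈ C ↔ y ∈ C) :=
    fun _ _ hxy hx hy => mem_reachableWithin_iff_of_adj hx hy hxy
  have hv₁C : v₁ ∈ C := ⟨.nil, by simp [Set.mem_symmDiff, hv₁A, hv₁B]⟩
  have hv₂C : v₂ ∉ C := by
    classical
    rintro ⟨w, hw⟩
    have hodd := hodd w.bypass w.bypass_isPath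
    rw [← Nat.not_even_iff_odd, even_length_iff_of_support_subset_symmDiff hA hB w.bypass
      fun y hy => hw y (w.support_bypass_subset_support hy)] at hodd
    exact hodd (iff_of_true hv₁A hv₂A)
  refine ⟨swapOn B A C, swapOn A B C, isStable_swapOn hB hA ?_, isStable_swapOn hA hB hC,
    Set.inter_pair_eq_singleton_left (.inr ⟨hv₁A, hv₁C⟩) ?_,
    Set.inter_pair_eq_singleton_right ?_ (.inl ⟨hv₂A, hv₂C⟩),
    slackCost_swapOn_add_slackCost_swapOn_le hc hA hB hC⟩
  · simpa only [symmDiff_comm B A] using hC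
  · simp [swapOn, hv₂B, hv₂C]
  · simp [swapOn, hv₁B, hv₁C]

end Exchange

section MinSlackCost

variable {V : Type*} [Fintype V] {H : SimpleGraph V} {c : Sym2 V → ℝ} {v₁ v₂ : V}

lemma slackCost_nonneg (hc : ∀ e ∈ H.edgeSet, 0 ≤ c e) (S : Set V) :
    0 ≤ slackCost H c S := by
  rw [slackCost_eq_sum_slackEdges]
  exact Finset.sum_nonneg fun e he => hc e (mem_slackEdges.mp he).1

lemma minSlackCost_le (hc : ∀ e ∈ H.edgeSet, 0 ≤ c e) {S I : Set V} (hS : IsStable H S)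
    (hI : S ∩ {v₁, v₂} = I) : minSlackCost H c v₁ v₂ I ≤ slackCost H c S :=
  csInf_le ⟨0, fun _ ⟨T, _, _, hr⟩ => hr ▸ slackCost_nonneg hc T⟩ ⟨S, hS, hI, rfl⟩

lemma le_minSlackCost_add_minSlackCost {I J : Set V} {m : ℝ}
    (hI : ∃ S : Set V, IsStable H S ∧ S ∩ {v₁, v₂} = I)
    (hJ : ∃ T : Set V, IsStable H T ∧ T ∩ {v₁, v₂} = J)
    (h : ∀ S T : Set V, IsStable H S → S ∩ {v₁, v₂} = I →
      IsStable H T → T ∩ {v₁, v₂} = J → m ≤ slackCost H c S + slackCost H c T) :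
    m ≤ minSlackCost H c v₁ v₂ I + minSlackCost H c v₁ v₂ J := by
  obtain ⟨S, hS, hSI⟩ := hI
  obtain ⟨T, hT, hTJ⟩ := hJ
  refine le_csInf_add_csInf ⟨_, S, hS, hSI, rfl⟩ ⟨_, T, hT, hTJ, rfl⟩ ?_
  rintro _ ⟨S', hS', hS'I, rfl⟩ _ ⟨T', hT', hT'J, rfl⟩
  exact h S' T' hS' hS'I hT' hT'J

end MinSlackCost

/-- if all `v₁`–`v₂` paths in `H` are odd and there exist a stable set
containing both of `v₁, v₂` and one containing neither, then for nonnegative edge costs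
the minimum slack-cost of stable sets with `S ∩ {v₁,v₂} = {v₁}` plus that for `{v₂}` is
at most the minimum for `{v₁,v₂}` plus the minimum for `∅`. -/
theorem stmt19 {V : Type*} [Fintype V] (H : SimpleGraph V) (v₁ v₂ : V)
    (hodd : ∀ p : H.Walk v₁ v₂, p.IsPath → Odd p.length)
    (c : Sym2 V → ℝ) (hc : ∀ e ∈ H.edgeSet, 0 ≤ c e)
    (h12 : ∃ S : Set V, IsStable H S ∧ S ∩ {v₁, v₂} = {v₁, v₂})
    (h0 : ∃ S : Set V, IsStable H S ∧ S ∩ {v₁, v₂} = ∅) :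
    minSlackCost H c v₁ v₂ {v₁} + minSlackCost H c v₁ v₂ {v₂}
      ≤ minSlackCost H c v₁ v₂ {v₁, v₂} + minSlackCost H c v₁ v₂ ∅ := by
  refine le_minSlackCost_add_minSlackCost h12 h0 fun A B hA hA12 hB hB0 => ?_
  obtain ⟨hv₁A, hv₂A⟩ := Set.mem_of_inter_pair_eq_pair hA12
  obtain ⟨hv₁B, hv₂B⟩ := Set.notMem_of_inter_pair_eq_empty hB0
  obtain ⟨S, T, hS, hT, hS₁, hT₂, hle⟩ :=
    exists_isStable_slackCost_add_le hodd hc hA hB hv₁A hv₂A hv₁B hv₂B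
  exact (add_le_add (minSlackCost_le hc hS hS₁) (minSlackCost_le hc hT hT₂)).trans hle
end
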